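/- Reduction Preserves MNF: let g be a graph term of the monadic normal form calculus λ_M and σ a store binding only λ_M introductions, such that σ | g →ₛᵥ σ' | t under the store-allocated-values reduction. Then (1) σ' is a store binding only λ_M introductions, and (2) t is again a graph term of λ_M. -/
import Mathlib


/-- Atoms: term variables and store locations. -/
inductive Atom : Type
  | var : ℕ → Atom
  | loc : ℕ → Atom
deriving DecidableEq

/-- Qualifiers, effects and observations: finite sets of atoms. -/
abbrev Qual : Type := Finset Atom

/-- Types of the direct-style λ*ε-calculus. `fn x p T ε r U` is `(x : T^p) →^ε U^r`. -/
inductive Ty : Type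
  | base : ℕ → Ty
  | fn : ℕ → Qual → Ty → Qual → Qual → Ty → Ty
  | ref : ℕ → Ty

/-- Entries of typing contexts / store typings. -/
abbrev Binding := ℕ × Ty × Qual
abbrev Ctx := List Binding
abbrev StoreTy := List Binding

/-- Lookup in an association list (most recent binding first). -/
def lookupL {α : Type} : List (ℕ × α) → ℕ → Option α
  | [], _ => none
  | (y, e) :: Γ, x => if x = y then some e else lookupL Γ x

def ctxAtoms (Γ : Ctx) : Qual := (Γ.map (fun b => Atom.var b.1)).toFinset
def styAtoms (St : StoreTy) : Qual := (St.map (fun b => Atom.loc b.1)).toFinset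

/-- Qualifier substitution `q[p/x]`. -/
def qsubst (q : Qual) (p : Qual) (x : ℕ) : Qual :=
  if Atom.var x ∈ q then (q.erase (Atom.var x)) ∪ p else q

/-- Term variables occurring in a qualifier. -/
def qVars (q : Qual) : Finset ℕ :=
  q.biUnion (fun a => match a with | Atom.var x => {x} | Atom.loc _ => ∅)

/-- Free term variables of a type. -/
def Ty.fv : Ty → Finset ℕ
  | .base _ => ∅
  | .ref _ => ∅
  | .fn x p T ε r U => qVars p ∪ T.fv ∪ ((qVars ε ∪ qVars r ∪ U.fv).erase x)

/-- Qualifier substitution, extended homomorphically to types. -/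
def Ty.qsubstT : Ty → Qual → ℕ → Ty
  | .base b, _, _ => .base b
  | .ref b, _, _ => .ref b
  | .fn y p T ε r U, q, x =>
      if y = x then .fn y (qsubst p q x) (T.qsubstT q x) ε r U
      else .fn y (qsubst p q x) (T.qsubstT q x) (qsubst ε q x) (qsubst r q x) (U.qsubstT q x)

/-- One-step reachability between atoms, as determined by Γ and Σ. -/
def Reaches (Γ : Ctx) (St : StoreTy) (a b : Atom) : Prop :=
  match a with
  | .var x => ∃ e : Ty × Qual, lookupL Γ x = some e ∧ b ∈ e.2
  | .loc l => ∃ e : Ty × Qual, lookupL St l = some e ∧ b ∈ e.2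

/-- `Sat Γ St q s` : `s` is the saturation (transitive reachability closure) `q*` of `q`. -/
def Sat (Γ : Ctx) (St : StoreTy) (q s : Qual) : Prop :=
  ∀ a, a ∈ s ↔ ∃ b ∈ q, Relation.ReflTransGen (Reaches Γ St) b a

/-- Qualifier subtyping (rule q-sub). -/
def SubQual (Γ : Ctx) (St : StoreTy) (p q : Qual) : Prop :=
  p ⊆ q ∧ q ⊆ ctxAtoms Γ ∪ styAtoms St

/-- Subtyping on ordinary types (rules s-base, s-ref, s-fun). -/
inductive SubTy : Ctx → StoreTy → Ty → Ty → Prop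
  | base {Γ St b} : SubTy Γ St (.base b) (.base b)
  | ref {Γ St b} : SubTy Γ St (.ref b) (.ref b)
  | fn {Γ St x o p q r ε₁ ε₂} {S U T V : Ty} :
      SubTy Γ St U S → SubQual Γ St p o →
      SubTy ((x, U, p) :: Γ) St T V →
      SubQual ((x, U, p) :: Γ) St q r →
      SubQual ((x, U, p) :: Γ) St ε₁ ε₂ →
      SubTy Γ St (.fn x o S ε₁ q T) (.fn x p U ε₂ r V)

/-- Subtyping on qualified types with effects (rule sqe-sub). -/
def SubQTy (Γ : Ctx) (St : StoreTy) (S : Ty) (p ε₁ : Qual) (T : Ty) (q ε₂ : Qual) : Prop :=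
  SubTy Γ St S T ∧ SubQual Γ St p q ∧ SubQual Γ St ε₁ ε₂

/-- Terms of the direct-style λ*ε-calculus. `cst b c` is the constant `c` of base type `b`;
`ref t₁ t₂` is `ref_{t₁} t₂`. -/
inductive Tm : Type
  | cst : ℕ → ℕ → Tm
  | fvar : ℕ → Tm
  | loc : ℕ → Tm
  | abs : ℕ → Tm → Tm
  | app : Tm → Tm → Tm
  | ref : Tm → Tm → Tm
  | deref : Tm → Tm
  | assign : Tm → Tm → Tm
  | lett : ℕ → Tm → Tm → Tm

/-- The base type `Alloc` of allocation capabilities. -/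
def allocB : ℕ := 0
/-- The base type `Unit`. -/
def unitB : ℕ := 1

/-- Term typing `Γ^φ | Σ ⊢ t : T^q ε` of the direct-style λ*ε-calculus. -/
inductive HasTy : Qual → Ctx → StoreTy → Tm → Ty → Qual → Qual → Prop
  | cst {φ Γ St b c} : HasTy φ Γ St (.cst b c) (.base b) ∅ ∅
  | var {φ Γ St x T q} :
      lookupL Γ x = some (T, q) → Atom.var x ∈ φ →
      HasTy φ Γ St (.fvar x) T {Atom.var x} ∅
  | loc {φ Γ St l T q} :
      lookupL St l = some (T, q) → Atom.loc l ∈ φ →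
      HasTy φ Γ St (.loc l) T {Atom.loc l} ∅
  | abs {φ Γ St x t T U p q r ε} :
      HasTy (insert (Atom.var x) q) ((x, T, p) :: Γ) St t U r ε →
      q ⊆ φ →
      HasTy φ Γ St (.abs x t) (.fn x p T ε r U) q ∅
  | app {φ Γ St t₁ t₂ x T U p q r ps qs ε₁ ε₂ ε₃} :
      HasTy φ Γ St t₁ (.fn x (ps ∩ qs) T ε₃ r U) q ε₁ →
      HasTy φ Γ St t₂ T p ε₂ →
      Sat Γ St p ps → Sat Γ St q qs →
      x ∉ U.fv → ε₃ ⊆ insert (Atom.var x) q → r ⊆ insert (Atom.var x) φ →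
      HasTy φ Γ St (.app t₁ t₂) U (qsubst r p x) (qsubst (ε₁ ∪ ε₂ ∪ ε₃) p x)
  | lett {φ Γ St x t₁ t₂ S T p q ps φs ε₁ ε₂} :
      HasTy φ Γ St t₁ S p ε₁ →
      Sat Γ St p ps → Sat Γ St φ φs →
      HasTy (insert (Atom.var x) φ) ((x, S, ps ∩ φs) :: Γ) St t₂ T q ε₂ →
      x ∉ T.fv →
      HasTy φ Γ St (.lett x t₁ t₂) T (qsubst q p x) (qsubst (ε₁ ∪ ε₂) p x)
  | ref {φ Γ St t₁ t₂ b q ε₁ ε₂} :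
      HasTy φ Γ St t₁ (.base allocB) q ε₁ →
      HasTy φ Γ St t₂ (.base b) ∅ ε₂ →
      HasTy φ Γ St (.ref t₁ t₂) (.ref b) ∅ (ε₁ ∪ ε₂ ∪ q)
  | deref {φ Γ St t b q ε} :
      HasTy φ Γ St t (.ref b) q ε →
      HasTy φ Γ St (.deref t) (.base b) ∅ (ε ∪ q)
  | assign {φ Γ St t₁ t₂ b q ε₁ ε₂} :
      HasTy φ Γ St t₁ (.ref b) q ε₁ →
      HasTy φ Γ St t₂ (.base b) ∅ ε₂ →
      HasTy φ Γ St (.assign t₁ t₂) (.base unitB) ∅ (ε₁ ∪ ε₂ ∪ q)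
  | sub {φ Γ St t S T p q ε₁ ε₂} :
      HasTy φ Γ St t S p ε₁ → SubQTy Γ St S p ε₁ T q ε₂ →
      q ⊆ φ → ε₂ ⊆ φ →
      HasTy φ Γ St t T q ε₂

/-- Term substitution `t[v/x]` (binders with the same name shadow `x`). -/
def Tm.subst : Tm → Tm → ℕ → Tm
  | .cst b c, _, _ => .cst b c
  | .fvar y, v, x => if y = x then v else .fvar y
  | .loc l, _, _ => .loc l
  | .abs y t, v, x => if y = x then .abs y t else .abs y (t.subst v x)
  | .app a b, v, x => .app (a.subst v x) (b.subst v x)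
  | .ref a b, v, x => .ref (a.subst v x) (b.subst v x)
  | .deref a, v, x => .deref (a.subst v x)
  | .assign a b, v, x => .assign (a.subst v x) (b.subst v x)
  | .lett y a b, v, x => .lett y (a.subst v x) (if y = x then b else b.subst v x)

/-- Values of the direct-style λ*ε-calculus. -/
inductive IsValue : Tm → Prop
  | cst {b c} : IsValue (.cst b c)
  | abs {x t} : IsValue (.abs x t)
  | loc {l} : IsValue (.loc l)

/-- Runtime stores for the store-allocated-values semantics: `let_s ℓ = ι` bindings. -/
abbrev Store := List (ℕ × Tm)

def updateStore : Store → ℕ → Tm → Store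
  | [], _, _ => []
  | (l, v) :: σ, l', v' => if l = l' then (l, v') :: σ else (l, v) :: updateStore σ l' v'

/-- Introductions `ι ::= c | λx.t | ref_ℓ ℓ`. -/
inductive IsIntro : Tm → Prop
  | cst {b c} : IsIntro (.cst b c)
  | abs {x t} : IsIntro (.abs x t)
  | ref {w l} : IsIntro (.ref (.loc w) (.loc l))

/-- Evaluation contexts for the store-allocated-values semantics:
`E ::= □ | E t | ℓ E | ref_E t | ref_ℓ E | !E | E := t | ℓ := E | let x = E in t`. -/
inductive SECtx : Type
  | hole : SECtx
  | appL : SECtx → Tm → SECtx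
  | appR : ℕ → SECtx → SECtx
  | refL : SECtx → Tm → SECtx
  | refR : ℕ → SECtx → SECtx
  | deref : SECtx → SECtx
  | assignL : SECtx → Tm → SECtx
  | assignR : ℕ → SECtx → SECtx
  | lett : ℕ → SECtx → Tm → SECtx

def SECtx.plug : SECtx → Tm → Tm
  | .hole, t => t
  | .appL E t₂, t => .app (E.plug t) t₂
  | .appR l E, t => .app (.loc l) (E.plug t)
  | .refL E t₂, t => .ref (E.plug t) t₂
  | .refR l E, t => .ref (.loc l) (E.plug t)
  | .deref E, t => .deref (E.plug t)
  | .assignL E t₂, t => .assign (E.plug t) t₂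
  | .assignR l E, t => .assign (.loc l) (E.plug t)
  | .lett x E t₂, t => .lett x (E.plug t) t₂

/-- Call-by-value reduction with store-allocated values, `σ | t →ₛᵥ σ' | t'`. -/
inductive StepSV : Store → Tm → Store → Tm → Prop
  | beta {σ E x t l₁ l₂} :
      lookupL σ l₁ = some (.abs x t) →
      StepSV σ (SECtx.plug E (.app (.loc l₁) (.loc l₂))) σ (SECtx.plug E (t.subst (.loc l₂) x))
  | lett {σ E x l t} :
      StepSV σ (SECtx.plug E (.lett x (.loc l) t)) σ (SECtx.plug E (t.subst (.loc l) x))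
  | intro {σ E ι l} :
      IsIntro ι → lookupL σ l = none →
      StepSV σ (SECtx.plug E ι) ((l, ι) :: σ) (SECtx.plug E (.loc l))
  | deref {σ E l w l'} :
      lookupL σ l = some (.ref (.loc w) (.loc l')) →
      StepSV σ (SECtx.plug E (.deref (.loc l))) σ (SECtx.plug E (.loc l'))
  | assign {σ E l w l' l''} :
      lookupL σ l = some (.ref (.loc w) (.loc l')) →
      StepSV σ (SECtx.plug E (.assign (.loc l) (.loc l'')))
        (updateStore σ l (.ref (.loc w) (.loc l''))) (SECtx.plug E (.cst unitB 0))

/-- Names `𝚡 ::= x | ℓ`. -/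
inductive IsName : Tm → Prop
  | var {x} : IsName (.fvar x)
  | loc {l} : IsName (.loc l)

mutual
  /-- λ_M introductions `ι ::= c | λx.g | ref_ℓ ℓ` (with `g` a graph term). -/
  inductive IsGIntro : Tm → Prop
    | cst {b c} : IsGIntro (.cst b c)
    | abs {x g} : IsGraph g → IsGIntro (.abs x g)
    | ref {w l} : IsGIntro (.ref (.loc w) (.loc l))
  /-- λ_M graph nodes `n ::= ι | 𝚡 𝚡 | ref_𝚡 𝚡 | !𝚡 | 𝚡 := 𝚡`. -/
  inductive IsNode : Tm → Prop
    | intro {ι} : IsGIntro ι → IsNode ι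
    | app {a b} : IsName a → IsName b → IsNode (.app a b)
    | ref {a b} : IsName a → IsName b → IsNode (.ref a b)
    | deref {a} : IsName a → IsNode (.deref a)
    | assign {a b} : IsName a → IsName b → IsNode (.assign a b)
  /-- λ_M graph terms `g ::= 𝚡 | let x = b in g`. -/
  inductive IsGraph : Tm → Prop
    | ret {a} : IsName a → IsGraph a
    | lett {x b g} : IsBind b → IsGraph g → IsGraph (.lett x b g)
  /-- λ_M bindings `b ::= n | g`. -/
  inductive IsBind : Tm → Prop
    | node {n} : IsNode n → IsBind n
    | graph {g} : IsGraph g → IsBind g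
end

/-! ### Auxiliary lemmas -/

theorem name_subst {a : Tm} {l x : ℕ} (h : IsName a) : IsName (a.subst (.loc l) x) := by
  cases h with
  | var => simp only [Tm.subst]; split <;> constructor
  | loc => exact .loc

mutual
theorem gintro_subst {t : Tm} {l x : ℕ} (h : IsGIntro t) : IsGIntro (t.subst (.loc l) x) :=
  match h with
  | .cst => .cst
  | @IsGIntro.abs y g hg => by
      simp only [Tm.subst]
      split
      · exact .abs hg
      · exact .abs (graph_subst hg)
  | .ref => .ref

theorem node_subst {t : Tm} {l x : ℕ} (h : IsNode t) : IsNode (t.subst (.loc l) x) :=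
  match h with
  | .intro hi => .intro (gintro_subst hi)
  | .app ha hb => .app (name_subst ha) (name_subst hb)
  | .ref ha hb => .ref (name_subst ha) (name_subst hb)
  | .deref ha => .deref (name_subst ha)
  | .assign ha hb => .assign (name_subst ha) (name_subst hb)

theorem graph_subst {t : Tm} {l x : ℕ} (h : IsGraph t) : IsGraph (t.subst (.loc l) x) :=
  match h with
  | .ret ha => .ret (name_subst ha)
  | @IsGraph.lett y b g hb hg => by
      simp only [Tm.subst]
      refine .lett (bind_subst hb) ?_
      split
      · exact hg
      · exact graph_subst hg

theorem bind_subst {t : Tm} {l x : ℕ} (h : IsBind t) : IsBind (t.subst (.loc l) x) :=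
  match h with
  | .node hn => .node (node_subst hn)
  | .graph hg => .graph (graph_subst hg)
end

theorem plug_not_name {E : SECtx} {r : Tm} (hr : ¬ IsName r) : ¬ IsName (E.plug r) := by
  cases E <;> simp only [SECtx.plug] <;> first
    | exact hr
    | exact fun h => by cases h

theorem graph_not_app {a b : Tm} : ¬ IsGraph (.app a b) := by
  intro h; cases h with | ret hn => cases hn

theorem graph_not_ref {a b : Tm} : ¬ IsGraph (.ref a b) := by
  intro h; cases h with | ret hn => cases hn

theorem graph_not_deref {a : Tm} : ¬ IsGraph (.deref a) := by
  intro h; cases h with | ret hn => cases hn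

theorem graph_not_assign {a b : Tm} : ¬ IsGraph (.assign a b) := by
  intro h; cases h with | ret hn => cases hn

theorem graph_not_abs {x : ℕ} {a : Tm} : ¬ IsGraph (.abs x a) := by
  intro h; cases h with | ret hn => cases hn

theorem graph_lett_inv {x : ℕ} {a b : Tm} (h : IsGraph (.lett x a b)) :
    IsBind a ∧ IsGraph b := by
  cases h with
  | ret hn => cases hn
  | lett hb hg => exact ⟨hb, hg⟩

theorem node_app_inv {a b : Tm} (h : IsNode (.app a b)) : IsName a ∧ IsName b := by
  cases h with
  | intro hi => cases hi
  | app ha hb => exact ⟨ha, hb⟩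

theorem node_ref_inv {a b : Tm} (h : IsNode (.ref a b)) : IsName a ∧ IsName b := by
  cases h with
  | intro hi => cases hi with | ref => exact ⟨.loc, .loc⟩
  | ref ha hb => exact ⟨ha, hb⟩

theorem node_deref_inv {a : Tm} (h : IsNode (.deref a)) : IsName a := by
  cases h with
  | intro hi => cases hi
  | deref ha => exact ha

theorem node_assign_inv {a b : Tm} (h : IsNode (.assign a b)) : IsName a ∧ IsName b := by
  cases h with
  | intro hi => cases hi
  | assign ha hb => exact ⟨ha, hb⟩

theorem node_not_lett {x : ℕ} {a b : Tm} : ¬ IsNode (.lett x a b) := by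
  intro h; cases h with | intro hi => cases hi

theorem bind_lett_inv {x : ℕ} {a b : Tm} (h : IsBind (.lett x a b)) :
    IsBind a ∧ IsGraph b := by
  cases h with
  | node hn => exact absurd hn node_not_lett
  | graph hg => exact graph_lett_inv hg

theorem bind_abs_inv {x : ℕ} {a : Tm} (h : IsBind (.abs x a)) : IsGIntro (.abs x a) := by
  cases h with
  | node hn =>
      cases hn with
      | intro hi => exact hi
  | graph hg => exact absurd hg graph_not_abs

theorem gintro_abs_inv {x : ℕ} {a : Tm} (h : IsGIntro (.abs x a)) : IsGraph a := by
  cases h with | abs hg => exact hg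

/-- Key decomposition lemma for bind positions: a non-name `r` plugged into `E`
occupies a bind position, and may be replaced by any graph (or, if `r` is not itself
a graph, by any bind). -/
theorem bind_plug {E : SECtx} : ∀ {r : Tm}, IsBind (SECtx.plug E r) → ¬ IsName r →
    IsBind r ∧ (∀ r', IsGraph r' → IsBind (SECtx.plug E r')) ∧
      (¬ IsGraph r → ∀ r', IsBind r' → IsBind (SECtx.plug E r')) := by
  induction E with
  | hole =>
      intro r hb _
      exact ⟨hb, fun _ hg => .graph hg, fun _ _ hb' => hb'⟩
  | appL E t ih =>
      intro r hb hn
      exfalso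
      cases hb with
      | node hn' => exact plug_not_name hn (node_app_inv hn').1
      | graph hg => exact graph_not_app hg
  | appR l E ih =>
      intro r hb hn
      exfalso
      cases hb with
      | node hn' => exact plug_not_name hn (node_app_inv hn').2
      | graph hg => exact graph_not_app hg
  | refL E t ih =>
      intro r hb hn
      exfalso
      cases hb with
      | node hn' => exact plug_not_name hn (node_ref_inv hn').1
      | graph hg => exact graph_not_ref hg
  | refR l E ih =>
      intro r hb hn
      exfalso
      cases hb with
      | node hn' => exact plug_not_name hn (node_ref_inv hn').2
      | graph hg => exact graph_not_ref hg
  | deref E ih =>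
      intro r hb hn
      exfalso
      cases hb with
      | node hn' => exact plug_not_name hn (node_deref_inv hn')
      | graph hg => exact graph_not_deref hg
  | assignL E t ih =>
      intro r hb hn
      exfalso
      cases hb with
      | node hn' => exact plug_not_name hn (node_assign_inv hn').1
      | graph hg => exact graph_not_assign hg
  | assignR l E ih =>
      intro r hb hn
      exfalso
      cases hb with
      | node hn' => exact plug_not_name hn (node_assign_inv hn').2
      | graph hg => exact graph_not_assign hg
  | lett x E g₂ ih =>
      intro r hb hn
      obtain ⟨hb', hg₂⟩ := bind_lett_inv hb
      obtain ⟨h1, h2, h3⟩ := ih hb' hn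
      exact ⟨h1, fun r' h => .graph (.lett (h2 r' h) hg₂),
        fun hng r' h => .graph (.lett (h3 hng r' h) hg₂)⟩

/-- Key decomposition lemma for graph terms. -/
theorem graph_plug {E : SECtx} {r : Tm} (hg : IsGraph (SECtx.plug E r)) (hn : ¬ IsName r) :
    IsBind r ∧ (∀ r', IsGraph r' → IsGraph (SECtx.plug E r')) ∧
      (¬ IsGraph r → ∀ r', IsBind r' → IsGraph (SECtx.plug E r')) := by
  cases E with
  | hole => exact ⟨.graph hg, fun _ h => h, fun hng _ _ => absurd hg hng⟩
  | appL E t => exact absurd hg graph_not_app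
  | appR l E => exact absurd hg graph_not_app
  | refL E t => exact absurd hg graph_not_ref
  | refR l E => exact absurd hg graph_not_ref
  | deref E => exact absurd hg graph_not_deref
  | assignL E t => exact absurd hg graph_not_assign
  | assignR l E => exact absurd hg graph_not_assign
  | lett x E g₂ =>
      obtain ⟨hb, hg₂⟩ := graph_lett_inv hg
      obtain ⟨h1, h2, h3⟩ := bind_plug hb hn
      exact ⟨h1, fun r' h => .lett (h2 r' h) hg₂,
        fun hng r' h => .lett (h3 hng r' h) hg₂⟩

theorem lookup_updateStore {σ : Store} {l : ℕ} {v : Tm} :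
    ∀ l' ι, lookupL (updateStore σ l v) l' = some ι → ι = v ∨ lookupL σ l' = some ι := by
  induction σ with
  | nil => intro l' ι h; simp [updateStore, lookupL] at h
  | cons p σ ih =>
      obtain ⟨l₀, v₀⟩ := p
      intro l' ι h
      by_cases he : l₀ = l
      · rw [updateStore, if_pos he] at h
        rw [lookupL] at h
        by_cases he' : l' = l₀
        · rw [if_pos he'] at h
          injection h with h
          exact Or.inl h.symm
        · rw [if_neg he'] at h
          right
          rw [lookupL, if_neg he']
          exact h
      · rw [updateStore, if_neg he] at h
        rw [lookupL] at h
        by_cases he' : l' = l₀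
        · rw [if_pos he'] at h
          right
          rw [lookupL, if_pos he']
          exact h
        · rw [if_neg he'] at h
          rcases ih l' ι h with h' | h'
          · exact Or.inl h'
          · right
            rw [lookupL, if_neg he']
            exact h'

/-- **Reduction Preserves MNF**: if `g` is a λ_M graph term, `σ` binds only λ_M
introductions, and `σ | g →ₛᵥ σ' | t`, then (1) `σ'` binds only λ_M introductions, and
(2) `t` is again a λ_M graph term. -/
theorem reduction_preserves_mnf
    (σ σ' : Store) (g t : Tm)
    (hg : IsGraph g)
    (hσ : ∀ l ι, lookupL σ l = some ι → IsGIntro ι)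
    (hstep : StepSV σ g σ' t) :
    (∀ l ι, lookupL σ' l = some ι → IsGIntro ι) ∧ IsGraph t := by
  cases hstep with
  | @beta E x t₀ l₁ l₂ hlk =>
      have hn : ¬ IsName (Tm.app (.loc l₁) (.loc l₂)) := by intro h; cases h
      have hgt : IsGraph t₀ := gintro_abs_inv (hσ l₁ _ hlk)
      exact ⟨hσ, (graph_plug hg hn).2.1 _ (graph_subst hgt)⟩
  | @lett E x l t₀ =>
      have hn : ¬ IsName (Tm.lett x (.loc l) t₀) := by intro h; cases h
      obtain ⟨hb, h2, _⟩ := graph_plug hg hn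
      have hgt : IsGraph t₀ := (bind_lett_inv hb).2
      exact ⟨hσ, h2 _ (graph_subst hgt)⟩
  | @intro E ι l hI hfresh =>
      have hn : ¬ IsName ι := by cases hI <;> intro h <;> cases h
      obtain ⟨hb, h2, _⟩ := graph_plug hg hn
      have hGI : IsGIntro ι := by
        cases hI with
        | cst => exact .cst
        | abs => exact bind_abs_inv hb
        | ref => exact .ref
      refine ⟨?_, h2 _ (.ret .loc)⟩
      intro l' ι' h
      rw [lookupL] at h
      by_cases he : l' = l
      · rw [if_pos he] at h
        injection h with h
        exact h ▸ hGI
      · rw [if_neg he] at h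
        exact hσ l' ι' h
  | @deref E l w l' hlk =>
      have hn : ¬ IsName (Tm.deref (.loc l)) := by intro h; cases h
      exact ⟨hσ, (graph_plug hg hn).2.1 _ (.ret .loc)⟩
  | @assign E l w l' l'' hlk =>
      have hn : ¬ IsName (Tm.assign (.loc l) (.loc l'')) := by intro h; cases h
      obtain ⟨_, _, h3⟩ := graph_plug hg hn
      refine ⟨?_, h3 graph_not_assign _ (.node (.intro .cst))⟩
      intro l₀ ι h
      rcases lookup_updateStore l₀ ι h with h' | h'
      · exact h' ▸ .ref
      · exact hσ l₀ ι h'
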